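/- Let G be a finite abelian group with |G| = m and let A ⊆ G. If R_A(g) ≤ 5 for all g ∈ G, then |S_2| + |S_4| ≤ (3/4)m + √(5m), where |S_2| and |S_4| denote the number of elements g ∈ G with R_A(g) = 2 and R_A(g) = 4, respectively. -/

import Mathlib

/-!
Write `t = |A|` and `E = ∑ R_A(g)²` for the additive energy of `A`, which also equals `∑ D(u)²`
where `D(u)` counts the pairs `(a, a') ∈ A × A` with `a - a' = u`.
Since `R_A ≤ 5`, the pointwise inequality `8·[r ∈ {2, 4}] + r² ≤ 6r` gives
`8 (|S₂| + |S₄|) + E ≤ 6t²`. On the difference side `(D - 2)(D - 3) ≥ 0` for every integer `D`;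
summing over `u ≠ 0`, with `D(0) = t` and `∑ D = t²`, gives `E ≥ 6t² - 5t - 6m + 6`.
Hence `8 (|S₂| + |S₄|) ≤ 6m + 5t`, and `t² = ∑ R_A ≤ 5m` finishes.
-/

/-- `repFn A g` is the number of ordered pairs `(a, a') ∈ A × A` with `a + a' = g`. -/
def repFn {G : Type*} [AddCommGroup G] [DecidableEq G] (A : Finset G) (g : G) : ℕ :=
  ((A ×ˢ A).filter fun p => p.1 + p.2 = g).card

open Finset

def diffFn {G : Type*} [AddCommGroup G] [DecidableEq G] (A : Finset G) (g : G) : ℕ :=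
  #{p ∈ A ×ˢ A | p.1 - p.2 = g}

theorem Finset.sum_sq_card_fiberwise_eq_card_filter {ι κ : Type*} [Fintype κ] [DecidableEq κ]
    (s : Finset ι) (f : ι → κ) :
    ∑ k, #{i ∈ s | f i = k} ^ 2 = #{x ∈ s ×ˢ s | f x.1 = f x.2} := by
  rw [card_eq_sum_card_fiberwise (f := fun x => f x.1) (t := univ) fun _ _ => mem_univ _]
  refine sum_congr rfl fun k _ => ?_
  rw [filter_filter, sq, ← card_product, ← filter_product]
  congr 1
  ext x
  simp only [mem_filter]
  grind

section

variable {G : Type*} [AddCommGroup G] [DecidableEq G]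

lemma diffFn_zero (A : Finset G) : diffFn A 0 = #A := by
  rw [diffFn, ← diag_card A]
  congr 1
  ext p
  simp only [mem_filter, mem_product, mem_diag, sub_eq_zero]
  grind

variable [Fintype G]

lemma sum_repFn (A : Finset G) : ∑ g, repFn A g = #A ^ 2 := by
  simp only [repFn]
  rw [← (card_eq_sum_card_fiberwise fun _ _ => mem_univ _), card_product, sq]

lemma sum_diffFn (A : Finset G) : ∑ g, diffFn A g = #A ^ 2 := by
  simp only [diffFn]
  rw [← (card_eq_sum_card_fiberwise fun _ _ => mem_univ _), card_product, sq]

theorem sum_repFn_sq_eq_sum_diffFn_sq (A : Finset G) :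
    ∑ g, repFn A g ^ 2 = ∑ g, diffFn A g ^ 2 := by
  simp only [repFn, diffFn, sum_sq_card_fiberwise_eq_card_filter]
  refine card_nbij' (fun x => ((x.1.1, x.2.1), (x.2.2, x.1.2)))
    (fun x => ((x.1.1, x.2.2), (x.1.2, x.2.1))) ?_ ?_ (fun _ _ => rfl) (fun _ _ => rfl)
  · simp only [coe_filter, mem_product, Set.MapsTo, Set.mem_ofPred_eq, sub_eq_sub_iff_add_eq_add]
    grind
  · simp only [coe_filter, mem_product, Set.MapsTo, Set.mem_ofPred_eq, sub_eq_sub_iff_add_eq_add]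
    grind

lemma card_sq_le_of_repFn_le {k : ℕ} {A : Finset G} (h : ∀ g, repFn A g ≤ k) :
    #A ^ 2 ≤ k * Fintype.card G := by
  rw [← sum_repFn, mul_comm, ← smul_eq_mul, ← card_univ]
  exact sum_le_card_nsmul _ _ _ fun g _ => h g

theorem le_sum_repFn_sq (A : Finset G) (a : ℤ) :
    (#A - a) * (#A - a - 1) + (2 * a + 1) * #A ^ 2 ≤
      ∑ g, (repFn A g : ℤ) ^ 2 + a * (a + 1) * Fintype.card G := by
  have hnonneg (d : ℤ) : 0 ≤ (d - a) * (d - a - 1) := by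
    rcases le_or_gt d a with h | h <;> nlinarith
  have hzero := single_le_sum (f := fun u => ((diffFn A u : ℤ) - a) * (diffFn A u - a - 1))
    (fun u _ => hnonneg _) (mem_univ 0)
  have hsum : ∑ u, (diffFn A u : ℤ) = #A ^ 2 := by exact_mod_cast sum_diffFn A
  have hsq : ∑ u, (diffFn A u : ℤ) ^ 2 = ∑ g, (repFn A g : ℤ) ^ 2 := by
    exact_mod_cast (sum_repFn_sq_eq_sum_diffFn_sq A).symm
  simp only [diffFn_zero] at hzero
  have hexpand : ∑ u, ((diffFn A u : ℤ) - a) * (diffFn A u - a - 1) =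
      ∑ u, (diffFn A u : ℤ) ^ 2 - (2 * a + 1) * ∑ u, (diffFn A u : ℤ) +
        a * (a + 1) * Fintype.card G := by
    calc _ = ∑ u, ((diffFn A u : ℤ) ^ 2 - (2 * a + 1) * diffFn A u + a * (a + 1)) :=
          sum_congr rfl fun _ _ => by ring
      _ = _ := by
          rw [sum_add_distrib, sum_sub_distrib, ← mul_sum, sum_const, card_univ, nsmul_eq_mul]
          ring
  rw [hexpand, hsum, hsq] at hzero
  linarith

lemma card_repFn_eq_two_or_four_le (A : Finset G) (h : ∀ g, repFn A g ≤ 5) :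
    8 * (#{g | repFn A g = 2} + #{g | repFn A g = 4}) + ∑ g, repFn A g ^ 2 ≤ 6 * #A ^ 2 := by
  have pointwise (r : ℕ) (hr : r ≤ 5) :
      8 * ((if r = 2 then 1 else 0) + (if r = 4 then 1 else 0)) + r ^ 2 ≤ 6 * r := by
    interval_cases r <;> decide
  simp only [card_filter, ← sum_add_distrib, mul_sum, ← sum_repFn]
  exact sum_le_sum fun g _ => pointwise _ (h g)

end

theorem stmt_18 {G : Type*} [AddCommGroup G] [Fintype G] [DecidableEq G]
    (m : ℕ) (hm : Fintype.card G = m) (A : Finset G)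
    (h : ∀ g : G, repFn A g ≤ 5) :
    (((Finset.univ.filter fun g : G => repFn A g = 2).card : ℝ)) +
      ((Finset.univ.filter fun g : G => repFn A g = 4).card : ℝ) ≤
      (3 / 4 : ℝ) * m + Real.sqrt (5 * m) := by
  subst hm
  have hupper : 8 * ((#{g | repFn A g = 2} : ℝ) + #{g | repFn A g = 4}) +
      ∑ g, (repFn A g : ℝ) ^ 2 ≤ 6 * #A ^ 2 := by
    exact_mod_cast card_repFn_eq_two_or_four_le A h
  have hlower : ((#A : ℝ) - 2) * (#A - 2 - 1) + (2 * 2 + 1) * #A ^ 2 ≤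
      ∑ g, (repFn A g : ℝ) ^ 2 + 2 * (2 + 1) * Fintype.card G := by
    exact_mod_cast le_sum_repFn_sq A 2
  have hcard : (#A : ℝ) ≤ √(5 * Fintype.card G) :=
    Real.le_sqrt_of_sq_le (by exact_mod_cast card_sq_le_of_repFn_le h)
  linarith [Real.sqrt_nonneg (5 * Fintype.card G : ℝ)]
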